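/- arXiv:1312.2255 — 3 statements merged into one kernel-verified Lean document; each statement's English description precedes it below -/
import Mathlib

section
/- Let X and X' be n × N matrices over k satisfying X J X^T = 0 and X' J X'^T = 0 (i.e., their row spaces are isotropic for the symmetric bilinear form). Then rank X = rank X' if and only if there exist an invertible n × n matrix P over k and an N × N matrix S over k with S J S^T = J such that X' = P X S. That is, two closed points of the orthogonal Littlewood variety lie in the same GL_n(k) × O_N(k) orbit if and only if they have the same rank. (Proposition 4.2(d), orbit classification.) -/
/-!
Over an algebraically closed field of characteristic `≠ 2`, a totally isotropic frame `W`
(independent rows, `W J Wᵀ = 0`) extends to a Witt basis: a hyperbolic partner `V` with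
`W J Vᵀ = 1`, `V J Vᵀ = 0`, followed by a `J`-orthonormal basis `U` of the orthogonal complement
of the rows of `W` and `V`. All frames of one size therefore complete to bases with the same Gram
matrix, so `O(J)` acts transitively on them (Witt's theorem). Factoring `X = D W` with `D` of full
column rank and `W` a basis of the row space, two isotropic matrices of equal rank differ by an
isometry `S` on the right and, since full column rank matrices are `GL`-equivalent, by some `P` on
the left.
-/

open Matrix Module

theorem Module.Basis.sumExtend_apply_inl {K V ι : Type*} [Field K] [AddCommGroup V]
    [Module K V] {v : ι → V} (hs : LinearIndependent K v) (i : ι) :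
    Basis.sumExtend hs (Sum.inl i) = v i := by
  simp only [Basis.sumExtend, Basis.reindex_apply, Basis.extend_apply_self]
  rfl

namespace LinearMap.BilinForm

variable {K V : Type*} [Field K] [IsAlgClosed K] [AddCommGroup V] [Module K V]
  [FiniteDimensional K V] [Invertible (2 : K)]

theorem exists_orthonormal_basis {B : LinearMap.BilinForm K V} (hs : LinearMap.IsSymm B)
    (hB : B.SeparatingLeft) :
    ∃ b : Basis (Fin (finrank K V)) K V, ∀ i j, B (b i) (b j) = (1 : Matrix _ _ K) i j := by
  obtain ⟨v, hv⟩ := exists_orthogonal_basis hs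
  have hv0 := hv.not_isOrtho_basis_self_of_separatingLeft hB
  choose s hs using fun i => IsAlgClosed.exists_eq_mul_self (B (v i) (v i))
  have hs0 : ∀ i, s i ≠ 0 := fun i h => hv0 i (by rw [hs i, h, zero_mul])
  refine ⟨v.unitsSMul fun i => (Units.mk0 (s i) (hs0 i))⁻¹, fun i j => ?_⟩
  simp only [Basis.unitsSMul_apply, Units.smul_def, map_smul, LinearMap.smul_apply, smul_eq_mul,
    Units.val_inv_eq_inv_val, Units.val_mk0, one_apply]
  rcases eq_or_ne i j with rfl | hij
  · rw [hs i, if_pos rfl]; field_simp [hs0 i]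
  · rw [hv hij, if_neg hij, mul_zero, mul_zero]

end LinearMap.BilinForm

namespace Matrix

section CommRing

variable {R : Type*} [CommRing R] {m ι κ : Type*} [Fintype ι]

theorem IsSymm.transpose_mul_mul_transpose {J : Matrix ι ι R} (hJ : J.IsSymm)
    (P : Matrix m ι R) (Q : Matrix κ ι R) : (P * J * Qᵀ)ᵀ = Q * J * Pᵀ := by
  rw [transpose_mul, transpose_mul, transpose_transpose, hJ.eq, Matrix.mul_assoc]

theorem exists_hyperbolic_partner [Fintype κ] [DecidableEq κ] [Invertible (2 : R)]
    {J : Matrix ι ι R} (hJ : J.IsSymm) {W Y : Matrix κ ι R} (hW : W * J * Wᵀ = 0)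
    (hY : W * J * Yᵀ = 1) : ∃ V : Matrix κ ι R, W * J * Vᵀ = 1 ∧ V * J * Vᵀ = 0 := by
  set G := Y * J * Yᵀ
  have hG : Gᵀ = G := hJ.transpose_mul_mul_transpose Y Y
  have hYW : Y * J * Wᵀ = 1 := by rw [← hJ.transpose_mul_mul_transpose, hY, transpose_one]
  -- correcting `Y` by `½ G W` kills its self-pairing without changing its pairing with `W`
  refine ⟨Y - (⅟2 : R) • (G * W), ?_, ?_⟩
  · rw [transpose_sub, transpose_smul, transpose_mul, hG, Matrix.mul_sub, Matrix.mul_smul,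
      ← Matrix.mul_assoc, hY, hW, Matrix.zero_mul, smul_zero, sub_zero]
  · calc (Y - (⅟2 : R) • (G * W)) * J * (Y - (⅟2 : R) • (G * W))ᵀ
        = G - (⅟2 : R) • (Y * J * Wᵀ * G) - (⅟2 : R) • (G * (W * J * Yᵀ))
            + (⅟2 * ⅟2 : R) • (G * (W * J * Wᵀ) * G) := by
          simp only [G, transpose_sub, transpose_smul, transpose_mul, transpose_transpose,
            hJ.eq, Matrix.sub_mul, Matrix.mul_sub, Matrix.smul_mul, Matrix.mul_smul,
            Matrix.mul_assoc, smul_smul, smul_sub]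
          abel
      _ = 0 := by
          rw [hYW, hY, hW, Matrix.one_mul, Matrix.mul_one, Matrix.mul_zero, Matrix.zero_mul,
            smul_zero, add_zero, sub_sub, ← add_smul, invOf_two_add_invOf_two, one_smul, sub_self]

end CommRing

section Field

variable {K : Type*} [Field K] {m ι κ : Type*} [Fintype m] [Fintype ι] [Fintype κ]

theorem exists_mul_eq_one_of_rank_eq_card [DecidableEq ι] [DecidableEq κ] {A : Matrix κ ι K}
    (hA : A.rank = Fintype.card κ) : ∃ B : Matrix ι κ K, A * B = 1 := by
  have hsurj : LinearMap.range A.mulVecLin = ⊤ :=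
    Submodule.eq_top_of_finrank_eq (by rw [finrank_fintype_fun_eq_card]; exact hA)
  obtain ⟨g, hg⟩ := A.mulVecLin.exists_rightInverse_of_surjective hsurj
  refine ⟨LinearMap.toMatrix' g, ?_⟩
  apply Matrix.toLin'.injective
  rw [Matrix.toLin'_mul, Matrix.toLin'_toMatrix', Matrix.toLin'_one]
  exact hg

theorem exists_rank_factorization (X : Matrix m ι K) {r : ℕ} (hr : X.rank = r) :
    ∃ (D : Matrix m (Fin r) K) (W : Matrix (Fin r) ι K),
      X = D * W ∧ D.rank = r ∧ W.rank = r := by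
  set R := Submodule.span K (Set.range X.row)
  have hXR : ∀ i, X i ∈ R := fun i => Submodule.subset_span ⟨i, rfl⟩
  let b : Basis (Fin r) K R :=
    (finBasis K R).reindex (finCongr ((rank_eq_finrank_span_row X).symm.trans hr))
  let D : Matrix m (Fin r) K := Matrix.of fun i => b.repr ⟨X i, hXR i⟩
  let W : Matrix (Fin r) ι K := Matrix.of fun k => b k
  have hX : X = D * W := by
    ext i j
    have := congrArg (fun x : R => (x : ι → K) j) (b.sum_repr ⟨X i, hXR i⟩)
    simp only [Submodule.coe_sum, Submodule.coe_smul, Finset.sum_apply, Pi.smul_apply,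
      smul_eq_mul] at this
    rw [← this, Matrix.mul_apply]
    rfl
  have hW : W.rank = r := by
    have : LinearIndependent K W.row := b.linearIndependent.map' R.subtype R.ker_subtype
    simpa using this.rank_matrix
  refine ⟨D, W, hX, le_antisymm ?_ ?_, hW⟩
  · simpa using D.rank_le_card_width
  · calc r = X.rank := hr.symm
      _ ≤ D.rank := hX ▸ rank_mul_le_left D W

theorem mul_mul_transpose_eq_zero_of_rank_eq_card [DecidableEq m] [DecidableEq κ]
    {J : Matrix ι ι K} {D : Matrix m κ K} {W : Matrix κ ι K} (hD : D.rank = Fintype.card κ)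
    (h : D * W * J * (D * W)ᵀ = 0) : W * J * Wᵀ = 0 := by
  obtain ⟨L, hL⟩ := exists_mul_eq_one_of_rank_eq_card (A := Dᵀ) (by rwa [rank_transpose])
  have hLD : Lᵀ * D = 1 := by rw [← transpose_transpose D, ← transpose_mul, hL, transpose_one]
  calc W * J * Wᵀ = (Lᵀ * D) * W * J * Wᵀ * (Lᵀ * D)ᵀ := by
        rw [hLD, transpose_one, Matrix.one_mul, Matrix.mul_one]
    _ = Lᵀ * (D * W * J * (D * W)ᵀ) * L := by
        simp only [transpose_mul, transpose_transpose, Matrix.mul_assoc]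
    _ = 0 := by rw [h, Matrix.mul_zero, Matrix.zero_mul]

variable [DecidableEq m] [DecidableEq ι]

theorem exists_isUnit_mul_eq_of_rank_eq_card {D D' : Matrix m κ K}
    (hD : D.rank = Fintype.card κ) (hD' : D'.rank = Fintype.card κ) :
    ∃ P : Matrix m m K, IsUnit P ∧ P * D = D' := by
  have hli : ∀ {C : Matrix m κ K}, C.rank = Fintype.card κ → LinearIndependent K C.col :=
    fun hC => linearIndependent_iff_card_eq_finrank_span.2 <| by
      rw [Set.finrank, ← rank_eq_finrank_span_cols, hC]
  let b := Basis.sumExtend (hli hD)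
  let b' := Basis.sumExtend (hli hD')
  have : Finite (κ ⊕ Basis.sumExtendIndex (hli hD)) := Module.Finite.finite_basis b
  have : Finite (κ ⊕ Basis.sumExtendIndex (hli hD')) := Module.Finite.finite_basis b'
  have : Finite (Basis.sumExtendIndex (hli hD)) := Finite.of_injective _ (@Sum.inr_injective κ _)
  have : Finite (Basis.sumExtendIndex (hli hD')) := Finite.of_injective _ (@Sum.inr_injective κ _)
  obtain ⟨e⟩ : Nonempty (Basis.sumExtendIndex (hli hD) ≃ Basis.sumExtendIndex (hli hD')) := by
    have h := (finrank_eq_nat_card_basis b).symm.trans (finrank_eq_nat_card_basis b')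
    rw [Nat.card_sum, Nat.card_sum] at h
    exact Finite.card_eq.1 (by omega)
  set f := b.equiv b' (Equiv.sumCongr (Equiv.refl κ) e)
  refine ⟨LinearMap.toMatrix' f.toLinearMap,
    LinearMap.isUnit_toMatrix'_iff.2 ((Module.End.isUnit_iff _).2 f.bijective), ?_⟩
  have hf : ∀ j, f (D.col j) = D'.col j := fun j => by
    rw [← Basis.sumExtend_apply_inl (hli hD), Basis.equiv_apply, Equiv.sumCongr_apply,
      Sum.map_inl, Equiv.refl_apply]
    exact Basis.sumExtend_apply_inl (hli hD') j
  ext i j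
  exact congrFun ((LinearMap.toMatrix'_mulVec _ _).trans (hf j)) i

theorem exists_isometry_mul_eq_of_mul_mul_transpose_eq [DecidableEq κ] {J : Matrix ι ι K}
    {T T' : Matrix κ ι K} {G : Matrix κ κ K} (hcard : Fintype.card κ = Fintype.card ι)
    (hG : IsUnit G) (hT : T * J * Tᵀ = G) (hT' : T' * J * T'ᵀ = G) :
    ∃ S : Matrix ι ι K, S * J * Sᵀ = J ∧ T * S = T' := by
  set R := J * Tᵀ * G⁻¹
  have hRG : R * G = J * Tᵀ := by
    rw [Matrix.mul_assoc, nonsing_inv_mul G ((isUnit_iff_isUnit_det G).1 hG), Matrix.mul_one]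
  have hTR : T * R = 1 := by
    rw [← Matrix.mul_assoc, ← Matrix.mul_assoc, hT,
      mul_nonsing_inv G ((isUnit_iff_isUnit_det G).1 hG)]
  have hRT : R * T = 1 := (mul_eq_one_comm_of_card_eq κ ι K hcard).1 hTR
  refine ⟨R * T', ?_, by rw [← Matrix.mul_assoc, hTR, Matrix.one_mul]⟩
  calc R * T' * J * (R * T')ᵀ = R * (T' * J * T'ᵀ) * Rᵀ := by
        simp only [transpose_mul, Matrix.mul_assoc]
    _ = J * Tᵀ * Rᵀ := by rw [hT', hRG]
    _ = J := by rw [Matrix.mul_assoc, ← transpose_mul, hRT, transpose_one, Matrix.mul_one]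

theorem separatingLeft_toBilin'_domRestrict_ker {J : Matrix ι ι K} (hJ : J.IsSymm)
    (hJu : IsUnit J) {A : Matrix κ ι K} [DecidableEq κ] (hA : IsUnit (A * J * Aᵀ)) :
    LinearMap.SeparatingLeft ((toBilin' J).domRestrict₁₂ (LinearMap.ker (A * J).mulVecLin)
      (LinearMap.ker (A * J).mulVecLin)) := by
  intro x hx
  have hAx : (A * J) *ᵥ (x : ι → K) = 0 := x.2
  suffices ∀ w, (x : ι → K) ⬝ᵥ J *ᵥ w = 0 from Subtype.ext <|
    (nondegenerate_of_det_ne_zero ((isUnit_iff_isUnit_det J).1 hJu).ne_zero).eq_zero_of_ortho this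
  intro w
  -- split `w` into a part orthogonal to the rows of `A` and a combination of those rows
  set c := (A * J * Aᵀ)⁻¹ *ᵥ (A * J) *ᵥ w
  have hz : w - Aᵀ *ᵥ c ∈ LinearMap.ker (A * J).mulVecLin := by
    rw [LinearMap.mem_ker, mulVecLin_apply, mulVec_sub, mulVec_mulVec, mulVec_mulVec,
      mul_nonsing_inv _ ((isUnit_iff_isUnit_det _).1 hA), one_mulVec, sub_self]
  have hc : (x : ι → K) ⬝ᵥ J *ᵥ Aᵀ *ᵥ c = 0 := by
    rw [mulVec_mulVec, dotProduct_mulVec, ← transpose_transpose (J * Aᵀ), vecMul_transpose,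
      transpose_mul, transpose_transpose, hJ.eq, hAx, zero_dotProduct]
  have := hx ⟨_, hz⟩
  rwa [LinearMap.domRestrict₁₂_apply, toBilin'_apply', mulVec_sub, dotProduct_sub, hc,
    sub_zero] at this

theorem exists_orthonormal_complement [IsAlgClosed K] [Invertible (2 : K)] [DecidableEq κ]
    {J : Matrix ι ι K} (hJ : J.IsSymm) (hJu : IsUnit J) {A : Matrix κ ι K}
    (hA : IsUnit (A * J * Aᵀ)) :
    ∃ (k : ℕ) (U : Matrix (Fin k) ι K), Fintype.card κ + k = Fintype.card ι ∧
      A * J * Uᵀ = 0 ∧ U * J * Uᵀ = 1 := by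
  set p := LinearMap.ker (A * J).mulVecLin
  obtain ⟨b, hb⟩ := LinearMap.BilinForm.exists_orthonormal_basis
    ((LinearMap.BilinForm.isSymm_iff.1 (isSymm_toBilin'_iff_isSymm.2 hJ)).domRestrict p)
    (separatingLeft_toBilin'_domRestrict_ker hJ hJu hA)
  refine ⟨finrank K p, Matrix.of fun i => b i, ?_, ?_, ?_⟩
  · have hrank : (A * J).rank = Fintype.card κ := by
      refine le_antisymm (rank_le_card_height _) ?_
      simpa [rank_of_isUnit _ hA] using rank_mul_le_left (A * J) Aᵀ
    rw [← hrank, ← finrank_fintype_fun_eq_card K]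
    exact LinearMap.finrank_range_add_finrank_ker _
  · ext i j
    exact congrFun (b j).2 i
  · ext i j
    rw [← hb i j, LinearMap.domRestrict₁₂_apply, toBilin'_apply', Matrix.mul_assoc]
    rfl

variable (K) in
def wittGram (κ : Type*) [DecidableEq κ] (k : ℕ) :
    Matrix ((κ ⊕ κ) ⊕ Fin k) ((κ ⊕ κ) ⊕ Fin k) K :=
  fromBlocks (fromBlocks 0 1 1 0) 0 0 1

theorem wittGram_mul_self [DecidableEq κ] (k : ℕ) : wittGram K κ k * wittGram K κ k = 1 := by
  simp [wittGram, fromBlocks_multiply, fromBlocks_one]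

theorem exists_wittBasis [IsAlgClosed K] [Invertible (2 : K)] [DecidableEq κ]
    {J : Matrix ι ι K} (hJ : J.IsSymm) (hJu : IsUnit J) {W : Matrix κ ι K}
    (hW : W * J * Wᵀ = 0) (hWr : W.rank = Fintype.card κ) :
    ∃ (k : ℕ) (V : Matrix κ ι K) (U : Matrix (Fin k) ι K),
      Fintype.card κ + Fintype.card κ + k = Fintype.card ι ∧
      fromRows (fromRows W V) U * J * (fromRows (fromRows W V) U)ᵀ = wittGram K κ k := by
  obtain ⟨Y, hY⟩ := exists_mul_eq_one_of_rank_eq_card (A := W * J)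
    (by rwa [rank_mul_eq_left_of_isUnit_det J W ((isUnit_iff_isUnit_det J).1 hJu)])
  obtain ⟨V, hWV, hVV⟩ :=
    exists_hyperbolic_partner hJ hW (Y := Yᵀ) (by rwa [transpose_transpose])
  have hVW : V * J * Wᵀ = 1 := by rw [← hJ.transpose_mul_mul_transpose, hWV, transpose_one]
  have hA : fromRows W V * J * (fromRows W V)ᵀ = fromBlocks 0 1 1 0 := by
    rw [fromRows_mul, transpose_fromRows, fromRows_mul_fromCols, hW, hWV, hVW, hVV]
  have hAu : IsUnit (fromRows W V * J * (fromRows W V)ᵀ) := by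
    refine hA ▸ IsUnit.of_mul_eq_one (fromBlocks 0 1 1 0) ?_
    simp [fromBlocks_multiply, fromBlocks_one]
  obtain ⟨k, U, hk, hAU, hUU⟩ := exists_orthonormal_complement hJ hJu hAu
  refine ⟨k, V, U, by simpa using hk, ?_⟩
  rw [fromRows_mul, transpose_fromRows, fromRows_mul_fromCols, hA, hAU, hUU,
    ← hJ.transpose_mul_mul_transpose, hAU, transpose_zero, wittGram]

theorem exists_isometry_mul_eq_of_isotropic [IsAlgClosed K] [Invertible (2 : K)] [DecidableEq κ]
    {J : Matrix ι ι K} (hJ : J.IsSymm) (hJu : IsUnit J) {W W' : Matrix κ ι K}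
    (hW : W * J * Wᵀ = 0) (hW' : W' * J * W'ᵀ = 0)
    (hWr : W.rank = Fintype.card κ) (hWr' : W'.rank = Fintype.card κ) :
    ∃ S : Matrix ι ι K, S * J * Sᵀ = J ∧ W * S = W' := by
  obtain ⟨k, V, U, hk, hT⟩ := exists_wittBasis hJ hJu hW hWr
  obtain ⟨k', V', U', hk', hT'⟩ := exists_wittBasis hJ hJu hW' hWr'
  obtain rfl : k = k' := by omega
  obtain ⟨S, hS, hTS⟩ := exists_isometry_mul_eq_of_mul_mul_transpose_eq (by simpa using hk)
    (IsUnit.of_mul_eq_one _ (wittGram_mul_self k)) hT hT'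
  rw [fromRows_mul, fromRows_mul] at hTS
  exact ⟨S, hS, (fromRows_inj (fromRows_inj hTS).1).1⟩

theorem isUnit_of_mul_mul_transpose_eq {J S : Matrix ι ι K} (hJu : IsUnit J)
    (hS : S * J * Sᵀ = J) : IsUnit S := by
  have hdet := congrArg det hS
  rw [det_mul, det_mul, det_transpose, mul_right_comm] at hdet
  rw [isUnit_iff_isUnit_det]
  exact IsUnit.of_mul_eq_one _ (((isUnit_iff_isUnit_det J).1 hJu).mul_eq_right.1 hdet)

theorem rank_eq_iff_exists_isUnit_mul_mul_eq [IsAlgClosed K] [Invertible (2 : K)]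
    {J : Matrix ι ι K} (hJ : J.IsSymm) (hJu : IsUnit J) {X X' : Matrix m ι K}
    (hX : X * J * Xᵀ = 0) (hX' : X' * J * X'ᵀ = 0) :
    X.rank = X'.rank ↔
      ∃ (P : Matrix m m K) (S : Matrix ι ι K),
        IsUnit P ∧ S * J * Sᵀ = J ∧ X' = P * X * S := by
  constructor
  · intro h
    obtain ⟨r, hr⟩ : ∃ r, X.rank = r := ⟨_, rfl⟩
    obtain ⟨D, W, rfl, hD, hW⟩ := exists_rank_factorization X hr
    obtain ⟨D', W', rfl, hD', hW'⟩ := exists_rank_factorization X' (h.symm.trans hr)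
    have hcard := (Fintype.card_fin r).symm
    obtain ⟨P, hP, rfl⟩ :=
      exists_isUnit_mul_eq_of_rank_eq_card (hD.trans hcard) (hD'.trans hcard)
    obtain ⟨S, hS, rfl⟩ := exists_isometry_mul_eq_of_isotropic hJ hJu
      (mul_mul_transpose_eq_zero_of_rank_eq_card (hD.trans hcard) hX)
      (mul_mul_transpose_eq_zero_of_rank_eq_card (hD'.trans hcard) hX')
      (hW.trans hcard) (hW'.trans hcard)
    exact ⟨P, S, hP, hS, by simp only [Matrix.mul_assoc]⟩
  · rintro ⟨P, S, hP, hS, rfl⟩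
    rw [rank_mul_eq_left_of_isUnit_det S _
        ((isUnit_iff_isUnit_det S).1 (isUnit_of_mul_mul_transpose_eq hJu hS)),
      rank_mul_eq_right_of_isUnit_det P X ((isUnit_iff_isUnit_det P).1 hP)]

end Field

end Matrix

theorem Equiv.Perm.isUnit_permMatrix {ι R : Type*} [Fintype ι] [DecidableEq ι]
    [Semiring R] (σ : Equiv.Perm ι) : IsUnit (σ.permMatrix R) :=
  ⟨⟨σ.permMatrix R, σ⁻¹.permMatrix R,
    by rw [← permMatrix_mul, inv_mul_cancel, permMatrix_one],
    by rw [← permMatrix_mul, mul_inv_cancel, permMatrix_one]⟩, rfl⟩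

theorem Function.Involutive.isSymm_permMatrix {ι R : Type*} [DecidableEq ι] [Zero R] [One R]
    {f : ι → ι} (hf : Function.Involutive f) : ((hf.toPerm f).permMatrix R).IsSymm := by
  rw [IsSymm, transpose_permMatrix, Equiv.Perm.inv_def, hf.toPerm_symm]

def splitInvolution (N : ℕ) (a : Fin N) : Fin N :=
  ⟨if a.1 % 2 = 0 then (if a.1 + 1 < N then a.1 + 1 else a.1) else a.1 - 1, by
    split_ifs <;> omega⟩

theorem splitInvolution_involutive (N : ℕ) : Function.Involutive (splitInvolution N) := by
  intro a
  ext
  simp only [splitInvolution]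
  split_ifs <;> omega

theorem eq_permMatrix_splitInvolution {K : Type*} [Field K] {n d d' N : ℕ} (hd' : d' ≤ 1)
    (hN : N = 2 * n + 2 * d + d') {J : Matrix (Fin N) (Fin N) K}
    (hJ : ∀ a b : Fin N, J a b =
      if (a.1 % 2 = 0 ∧ b.1 = a.1 + 1) ∨ (b.1 % 2 = 0 ∧ a.1 = b.1 + 1) then 1
      else if a = b ∧ a.1 = 2 * (n + d) then 1 else 0) :
    J = ((splitInvolution_involutive N).toPerm _).permMatrix K := by
  ext a b
  simp only [hJ, Equiv.Perm.permMatrix, PEquiv.toMatrix_apply, Equiv.toPEquiv_apply,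
    Option.mem_def, Option.some_inj, Function.Involutive.coe_toPerm, Fin.ext_iff, splitInvolution]
  split_ifs <;> first | rfl | omega

theorem orthogonal_littlewood_orbit_classification_general
    (K : Type*) [Field K] [IsAlgClosed K] (hchar : ringChar K ≠ 2)
    (n d d' : ℕ) (hd' : d' ≤ 1) (N : ℕ) (hN : N = 2 * n + 2 * d + d')
    (J : Matrix (Fin N) (Fin N) K)
    (hJ : ∀ a b : Fin N, J a b =
      if (a.1 % 2 = 0 ∧ b.1 = a.1 + 1) ∨ (b.1 % 2 = 0 ∧ a.1 = b.1 + 1) then 1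
      else if a = b ∧ a.1 = 2 * (n + d) then 1 else 0)
    (X X' : Matrix (Fin n) (Fin N) K)
    (hX : X * J * X.transpose = 0) (hX' : X' * J * X'.transpose = 0) :
    X.rank = X'.rank ↔
      ∃ (P : Matrix (Fin n) (Fin n) K) (S : Matrix (Fin N) (Fin N) K),
        IsUnit P ∧ S * J * S.transpose = J ∧ X' = P * X * S := by
  have : Invertible (2 : K) := invertibleOfNonzero (Ring.two_ne_zero hchar)
  obtain rfl := eq_permMatrix_splitInvolution hd' hN hJ
  exact rank_eq_iff_exists_isUnit_mul_mul_eq (Function.Involutive.isSymm_permMatrix _)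
    (Equiv.Perm.isUnit_permMatrix (R := K) _) hX hX'

/-- Two `n × N` matrices whose row spaces are isotropic for the
standard split symmetric bilinear form `J` on `K^N` (`N = 2n + 2d + d'`), i.e.
satisfying `X J Xᵀ = 0`, have the same rank if and only if they differ by the action
of `GL_n(K) × O_N(K)`: `X' = P X S` with `P` invertible and `S J Sᵀ = J`. -/
theorem orthogonal_littlewood_orbit_classification
    (K : Type*) [Field K] [IsAlgClosed K] (hchar : ringChar K ≠ 2)
    (n d d' : ℕ) (hn : 1 ≤ n) (hd' : d' ≤ 1) (N : ℕ) (hN : N = 2 * n + 2 * d + d')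
    (J : Matrix (Fin N) (Fin N) K)
    (hJ : ∀ a b : Fin N, J a b =
      if (a.1 % 2 = 0 ∧ b.1 = a.1 + 1) ∨ (b.1 % 2 = 0 ∧ a.1 = b.1 + 1) then 1
      else if a = b ∧ a.1 = 2 * (n + d) then 1 else 0)
    (X X' : Matrix (Fin n) (Fin N) K)
    (hX : X * J * X.transpose = 0) (hX' : X' * J * X'.transpose = 0) :
    X.rank = X'.rank ↔
      ∃ (P : Matrix (Fin n) (Fin n) K) (S : Matrix (Fin N) (Fin N) K),
        IsUnit P ∧ S * J * S.transpose = J ∧ X' = P * X * S :=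
  orthogonal_littlewood_orbit_classification_general K hchar n d d' hd' N hN J hJ X X' hX hX'
end

section
/- The nm quadrics g_{j,i} (the entries of the product Y X of the two generic matrices) form a regular sequence in the polynomial ring A. In particular, the coordinate ring B = A/Q of the variety of length-2 complexes is a complete intersection. (Proposition 5.1(e).) -/
/-!
Weight the variables so that `y_{j,i+j} x_{i+j,i}` is the unique leading monomial `μ_{j,i}`
of `g_{j,i}`; these leading monomials have pairwise disjoint supports. For generators `f_t`
with pairwise coprime leading monomials `μ_t`, the top component of every element of
`(f_t : t ∈ T)` lies in `(μ_t : t ∈ T)` (Buchberger's first criterion), by induction on `T`: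
if the top components of `a f_{t₀}` and of the rest cancel, the leading form of `a` lies in
`(μ_t : t ∈ T)` by coprimality, so `a` can be lowered modulo `(f_t : t ∈ T)`. The same
lowering, by induction on the degree of `h`, shows that `f_{t₀} h ∈ (f_t : t ∈ T)` forces
`h ∈ (f_t : t ∈ T)`, and `1` is not in the ideal since no `μ_t` is constant.
-/

open MvPolynomial RingTheory.Sequence

theorem RingTheory.Sequence.isRegular_map_of_mul_mem_span {R ι : Type*} [CommRing R]
    (f : ι → R) {L : List ι} (hL : L.Nodup)
    (hcolon : ∀ (T : Finset ι) t, t ∉ T → ∀ h, f t * h ∈ Ideal.span (f '' T) →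
      h ∈ Ideal.span (f '' T))
    (hone : ∀ T : Finset ι, (1 : R) ∉ Ideal.span (f '' T)) :
    IsRegular R (L.map f) := by
  classical
  have hspan (l : List ι) :
      Ideal.ofList (l.map f) • (⊤ : Submodule R R) = Ideal.span (f '' ↑l.toFinset) := by
    rw [Ideal.smul_eq_mul, Ideal.mul_top, List.coe_toFinset, Ideal.ofList]
    congr 1
    ext
    simp
  refine ⟨(isWeaklyRegular_iff _ _).mpr fun i hi => ?_, ?_⟩
  · rw [List.length_map] at hi
    rw [List.getElem_map, ← List.map_take, hspan, isSMulRegular_quotient_iff_mem_of_smul_mem]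
    refine hcolon _ _ fun h => ?_
    have hnodup := hL.sublist (List.take_sublist (i + 1) L)
    rw [List.take_add_one, List.getElem?_eq_getElem hi, Option.toList_some,
      List.nodup_append] at hnodup
    exact hnodup.2.2 _ (List.mem_toFinset.mp h) _ (List.mem_singleton_self _) rfl
  · rw [hspan, ne_comm, Ne, Ideal.eq_top_iff_one]
    exact hone _

namespace MvPolynomial

variable {R σ : Type*} [CommRing R] (w : σ → ℕ)

noncomputable def weightedDegreeLT (n : ℕ) : Submodule R (MvPolynomial σ R) :=
  restrictSupport R {ν | Finsupp.weight w ν < n}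

variable {w}

lemma mem_weightedDegreeLT {n : ℕ} {p : MvPolynomial σ R} :
    p ∈ weightedDegreeLT w n ↔ ∀ ν ∈ p.support, Finsupp.weight w ν < n :=
  mem_restrictSupport_iff R

lemma weightedDegreeLT_mono {m n : ℕ} (h : m ≤ n) :
    weightedDegreeLT (R := R) w m ≤ weightedDegreeLT w n :=
  restrictSupport_mono _ fun _ hν => lt_of_lt_of_le hν h

lemma eq_zero_of_mem_weightedDegreeLT_zero {p : MvPolynomial σ R}
    (hp : p ∈ weightedDegreeLT w 0) : p = 0 := by
  by_contra h
  obtain ⟨ν, hν⟩ := support_nonempty.mpr h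
  exact Nat.not_lt_zero _ (mem_weightedDegreeLT.mp hp ν hν)

lemma mem_weightedDegreeLT_of_weightedTotalDegree_lt {n : ℕ} {p : MvPolynomial σ R}
    (hp : weightedTotalDegree w p < n) : p ∈ weightedDegreeLT w n :=
  mem_weightedDegreeLT.mpr fun _ hν => (le_weightedTotalDegree w hν).trans_lt hp

lemma weightedTotalDegree_lt_of_mem {n : ℕ} (hn : 0 < n) {p : MvPolynomial σ R}
    (hp : p ∈ weightedDegreeLT w n) : weightedTotalDegree w p < n :=
  (Finset.sup_lt_iff hn).mpr (mem_weightedDegreeLT.mp hp)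

lemma mul_mem_weightedDegreeLT {m n : ℕ} {p q : MvPolynomial σ R}
    (hp : p ∈ weightedDegreeLT w (m + 1)) (hq : q ∈ weightedDegreeLT w n) :
    p * q ∈ weightedDegreeLT w (m + n) := by
  classical
  refine mem_weightedDegreeLT.mpr fun ν hν => ?_
  obtain ⟨α, hα, β, hβ, rfl⟩ := Finset.mem_add.mp (support_mul p q hν)
  have := mem_weightedDegreeLT.mp hp α hα
  have := mem_weightedDegreeLT.mp hq β hβ
  rw [map_add]
  omega

lemma IsWeightedHomogeneous.mem_weightedDegreeLT {k : ℕ} {p : MvPolynomial σ R}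
    (hp : IsWeightedHomogeneous w p k) : p ∈ weightedDegreeLT w (k + 1) :=
  MvPolynomial.mem_weightedDegreeLT.mpr fun _ hν =>
    (hp (mem_support_iff.mp hν)).trans_lt k.lt_succ_self

lemma weightedHomogeneousComponent_eq_zero_of_mem {n k : ℕ} {p : MvPolynomial σ R}
    (hp : p ∈ weightedDegreeLT w n) (hk : n ≤ k) : weightedHomogeneousComponent w k p = 0 := by
  ext ν
  rw [coeff_weightedHomogeneousComponent, coeff_zero, ite_eq_right_iff]
  intro hν
  by_contra h
  have := mem_weightedDegreeLT.mp hp ν (mem_support_iff.mpr h)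
  omega

lemma sub_weightedHomogeneousComponent_mem {k : ℕ} {p : MvPolynomial σ R}
    (hp : p ∈ weightedDegreeLT w (k + 1)) :
    p - weightedHomogeneousComponent w k p ∈ weightedDegreeLT w k := by
  refine mem_weightedDegreeLT.mpr fun ν hν => ?_
  rw [mem_support_iff, coeff_sub, coeff_weightedHomogeneousComponent] at hν
  have := mem_weightedDegreeLT.mp hp ν
  split_ifs at hν with h
  · simp at hν
  · rw [sub_zero, ← mem_support_iff] at hν
    have := this hν
    omega

section Homogeneous

variable {φ : MvPolynomial σ R} {n : ℕ} (hφ : IsWeightedHomogeneous w φ n)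
include hφ

attribute [local instance] weightedGradedAlgebra in
lemma weightedHomogeneousComponent_mul_of_isWeightedHomogeneous (p : MvPolynomial σ R) (k : ℕ) :
    weightedHomogeneousComponent w k (p * φ) =
      if n ≤ k then weightedHomogeneousComponent w (k - n) p * φ else 0 := by
  simp_rw [← weightedDecomposition.decompose'_apply]
  exact DirectSum.coe_decompose_mul_of_right_mem _ k hφ

lemma exists_weightedHomogeneousComponent_mul_eq (p : MvPolynomial σ R) (k : ℕ) :
    ∃ c, weightedHomogeneousComponent w k (p * φ) = c * φ := by
  rw [weightedHomogeneousComponent_mul_of_isWeightedHomogeneous hφ]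
  split_ifs
  exacts [⟨_, rfl⟩, ⟨0, (zero_mul _).symm⟩]

lemma mem_weightedDegreeLT_of_sub_mem {p : MvPolynomial σ R}
    (hp : p - φ ∈ weightedDegreeLT w n) :
    p ∈ weightedDegreeLT w (n + 1) := by
  rw [← sub_add_cancel p φ]
  exact add_mem (weightedDegreeLT_mono (Nat.le_succ _) hp) hφ.mem_weightedDegreeLT

lemma weightedHomogeneousComponent_mul_of_sub_mem {a p : MvPolynomial σ R}
    (hp : p - φ ∈ weightedDegreeLT w n) {k : ℕ} (ha : a ∈ weightedDegreeLT w (k + 1)) :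
    weightedHomogeneousComponent w (k + n) (a * p) = weightedHomogeneousComponent w k a * φ := by
  have hlow : weightedHomogeneousComponent w (k + n) (a * (p - φ)) = 0 :=
    weightedHomogeneousComponent_eq_zero_of_mem (mul_mem_weightedDegreeLT ha hp) le_rfl
  rw [← add_sub_cancel φ p, mul_add, map_add, hlow, add_zero,
    weightedHomogeneousComponent_mul_of_isWeightedHomogeneous hφ, if_pos le_add_self,
    Nat.add_sub_cancel]

end Homogeneous

lemma mul_mem_weightedDegreeLT_of_isWeightedHomogeneous {b q : MvPolynomial σ R}
    {e : σ →₀ ℕ} {k : ℕ} (hb : IsWeightedHomogeneous w (b * monomial e 1) k)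
    (hq : q ∈ weightedDegreeLT w (Finsupp.weight w e)) : b * q ∈ weightedDegreeLT w k := by
  classical
  refine mem_weightedDegreeLT.mpr fun ν hν => ?_
  obtain ⟨α, hα, β, hβ, rfl⟩ := Finset.mem_add.mp (support_mul b q hν)
  have hαe : Finsupp.weight w (α + e) = k :=
    hb (by rwa [coeff_mul_monomial, mul_one, ← mem_support_iff])
  have := mem_weightedDegreeLT.mp hq β hβ
  rw [map_add] at hαe ⊢
  omega

lemma mem_span_monomial_of_monomial_mul_mem {ι : Type*} {E : ι → σ →₀ ℕ} {T : Set ι}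
    {e : σ →₀ ℕ} (hT : ∀ t ∈ T, Disjoint (E t).support e.support) {p : MvPolynomial σ R}
    (h : monomial e 1 * p ∈ Ideal.span ((fun t => monomial (E t) (1 : R)) '' T)) :
    p ∈ Ideal.span ((fun t => monomial (E t) (1 : R)) '' T) := by
  rw [← Set.image_image (fun s => monomial s (1 : R)) E, mem_ideal_span_monomial_image] at h ⊢
  intro ν hν
  obtain ⟨_, ⟨t, ht, rfl⟩, hle⟩ :=
    h (e + ν) (by rwa [mem_support_iff, coeff_monomial_mul, one_mul, ← mem_support_iff])
  refine ⟨E t, ⟨t, ht, rfl⟩, fun x => ?_⟩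
  by_cases hx : x ∈ (E t).support
  · have hex : e x = 0 := Finsupp.notMem_support_iff.mp (Finset.disjoint_left.mp (hT t ht) hx)
    simpa [hex] using hle x
  · simp [Finsupp.notMem_support_iff.mp hx]

section LeadingMonomials

variable {ι : Type*} {E : ι → σ →₀ ℕ} {f : ι → MvPolynomial σ R}

lemma exists_weightedHomogeneousComponent_eq_sum {T : Finset ι} {p : MvPolynomial σ R}
    (hp : p ∈ Ideal.span ((fun t => monomial (E t) (1 : R)) '' T)) (k : ℕ) :
    ∃ b : ι → MvPolynomial σ R,
      weightedHomogeneousComponent w k p = ∑ t ∈ T, b t * monomial (E t) 1 ∧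
      ∀ t, IsWeightedHomogeneous w (b t * monomial (E t) 1) k := by
  obtain ⟨a, rfl⟩ := (Submodule.mem_span_image_finset_iff_exists_fun' _).mp hp
  choose b hb using fun t => exists_weightedHomogeneousComponent_mul_eq
    (isWeightedHomogeneous_monomial w (E t) 1 rfl) (a t) k
  refine ⟨b, ?_, fun t => hb t ▸ weightedHomogeneousComponent_isWeightedHomogeneous k _⟩
  simp only [smul_eq_mul, map_sum, hb]

variable (hf : ∀ t, f t - monomial (E t) 1 ∈ weightedDegreeLT w (Finsupp.weight w (E t)))
include hf

lemma exists_sub_mem_weightedDegreeLT {T : Finset ι} {a : MvPolynomial σ R} {k : ℕ}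
    (ha : a ∈ weightedDegreeLT w (k + 1))
    (hk : weightedHomogeneousComponent w k a ∈
      Ideal.span ((fun t => monomial (E t) (1 : R)) '' T)) :
    ∃ c ∈ Ideal.span (f '' T), a - c ∈ weightedDegreeLT w k := by
  obtain ⟨b, hb, hhom⟩ := exists_weightedHomogeneousComponent_eq_sum hk k
  rw [(weightedHomogeneousComponent_isWeightedHomogeneous k a).weightedHomogeneousComponent_same]
    at hb
  refine ⟨∑ t ∈ T, b t * f t,
    Ideal.sum_mem _ fun t ht => Ideal.mul_mem_left _ _ (Ideal.subset_span ⟨t, ht, rfl⟩), ?_⟩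
  have hsplit : a - ∑ t ∈ T, b t * f t = (a - weightedHomogeneousComponent w k a) -
      ∑ t ∈ T, b t * (f t - monomial (E t) 1) := by
    simp only [hb, mul_sub, Finset.sum_sub_distrib]
    ring
  rw [hsplit]
  exact sub_mem (sub_weightedHomogeneousComponent_mem ha) (Submodule.sum_mem _ fun t _ =>
    mul_mem_weightedDegreeLT_of_isWeightedHomogeneous (hhom t) (hf t))

lemma exists_mem_weightedDegreeLT_mul_add_eq {T : Finset ι} {t₀ : ι}
    (hdisj : ∀ t ∈ T, Disjoint (E t).support (E t₀).support)
    (ih : ∀ h ∈ Ideal.span (f '' T), ∀ D, h ∈ weightedDegreeLT w (D + 1) →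
      weightedHomogeneousComponent w D h ∈ Ideal.span ((fun t => monomial (E t) (1 : R)) '' T))
    {k : ℕ} {a h : MvPolynomial σ R} (ha : a ∈ weightedDegreeLT w (k + 1))
    (hh : h ∈ Ideal.span (f '' T)) {D : ℕ} (hD : a * f t₀ + h ∈ weightedDegreeLT w (D + 1))
    (hkD : D < k + Finsupp.weight w (E t₀)) :
    ∃ a' ∈ weightedDegreeLT w k, ∃ h' ∈ Ideal.span (f '' T),
      a' * f t₀ + h' = a * f t₀ + h := by
  have hμ₀ := isWeightedHomogeneous_monomial w (E t₀) (1 : R) rfl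
  have haf := mul_mem_weightedDegreeLT ha (mem_weightedDegreeLT_of_sub_mem hμ₀ (hf t₀))
  rw [← add_assoc] at haf
  have hh' : h ∈ weightedDegreeLT w (k + Finsupp.weight w (E t₀) + 1) := by
    simpa using sub_mem (weightedDegreeLT_mono (by omega) hD) haf
  -- the top components of `a * f t₀` and `h` in degree `k + weight (E t₀) > D` cancel
  have hlead : weightedHomogeneousComponent w k a * monomial (E t₀) 1 ∈
      Ideal.span ((fun t => monomial (E t) (1 : R)) '' T) := by
    have hzero := weightedHomogeneousComponent_eq_zero_of_mem hD hkD
    rw [map_add, weightedHomogeneousComponent_mul_of_sub_mem hμ₀ (hf t₀) ha,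
      add_eq_zero_iff_eq_neg] at hzero
    exact hzero ▸ neg_mem (ih h hh _ hh')
  obtain ⟨c, hc, hac⟩ := exists_sub_mem_weightedDegreeLT hf ha
    (mem_span_monomial_of_monomial_mul_mem hdisj (by rwa [mul_comm] at hlead))
  exact ⟨a - c, hac, h + c * f t₀, add_mem hh (Ideal.mul_mem_right _ _ hc), by ring⟩

lemma weightedHomogeneousComponent_mem_span_insert [DecidableEq ι] {T : Finset ι} {t₀ : ι}
    (hdisj : ∀ t ∈ T, Disjoint (E t).support (E t₀).support)
    (ih : ∀ h ∈ Ideal.span (f '' T), ∀ D, h ∈ weightedDegreeLT w (D + 1) →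
      weightedHomogeneousComponent w D h ∈ Ideal.span ((fun t => monomial (E t) (1 : R)) '' T))
    (k : ℕ) {a h : MvPolynomial σ R} (ha : a ∈ weightedDegreeLT w k)
    (hh : h ∈ Ideal.span (f '' T)) {D : ℕ}
    (hD : a * f t₀ + h ∈ weightedDegreeLT w (D + 1)) :
    weightedHomogeneousComponent w D (a * f t₀ + h) ∈
      Ideal.span ((fun t => monomial (E t) (1 : R)) '' ↑(insert t₀ T)) := by
  have hmono : Ideal.span ((fun t => monomial (E t) (1 : R)) '' T) ≤
      Ideal.span ((fun t => monomial (E t) (1 : R)) '' ↑(insert t₀ T)) :=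
    Ideal.span_mono (Set.image_mono (by simp))
  induction k generalizing a h with
  | zero =>
    rw [eq_zero_of_mem_weightedDegreeLT_zero ha, zero_mul, zero_add] at hD ⊢
    exact hmono (ih h hh D hD)
  | succ k ihk =>
    by_cases hkD : D < k + Finsupp.weight w (E t₀)
    · obtain ⟨a', ha', h', hh', heq⟩ :=
        exists_mem_weightedDegreeLT_mul_add_eq hf hdisj ih ha hh hD hkD
      rw [← heq] at hD ⊢
      exact ihk ha' hh' hD
    · obtain ⟨j, rfl⟩ := Nat.exists_eq_add_of_le' (by omega : Finsupp.weight w (E t₀) ≤ D)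
      have hμ₀ := isWeightedHomogeneous_monomial w (E t₀) (1 : R) rfl
      have ha' : a ∈ weightedDegreeLT w (j + 1) := weightedDegreeLT_mono (by omega) ha
      have haf := mul_mem_weightedDegreeLT ha' (mem_weightedDegreeLT_of_sub_mem hμ₀ (hf t₀))
      rw [← add_assoc] at haf
      have hh' : h ∈ weightedDegreeLT w (j + Finsupp.weight w (E t₀) + 1) := by
        simpa using sub_mem hD haf
      rw [map_add, weightedHomogeneousComponent_mul_of_sub_mem hμ₀ (hf t₀) ha']
      exact add_mem (Ideal.mul_mem_left _ _ (Ideal.subset_span ⟨t₀, by simp, rfl⟩))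
        (hmono (ih h hh _ hh'))

variable (hE : Pairwise fun s t => Disjoint (E s).support (E t).support)
include hE

theorem weightedHomogeneousComponent_mem_span_monomial (T : Finset ι) {h : MvPolynomial σ R}
    (hh : h ∈ Ideal.span (f '' T)) {D : ℕ} (hD : h ∈ weightedDegreeLT w (D + 1)) :
    weightedHomogeneousComponent w D h ∈ Ideal.span ((fun t => monomial (E t) (1 : R)) '' T) := by
  classical
  induction T using Finset.induction_on generalizing h D with
  | empty =>
    rw [Finset.coe_empty, Set.image_empty, Ideal.span_empty, Ideal.mem_bot] at hh
    simp [hh]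
  | insert t₀ T ht₀ ih =>
    rw [Finset.coe_insert, Set.image_insert_eq, Ideal.mem_span_insert] at hh
    obtain ⟨a, h', hh', rfl⟩ := hh
    exact weightedHomogeneousComponent_mem_span_insert hf
      (fun t ht => hE (ne_of_mem_of_not_mem ht ht₀)) (fun _ h D => ih h)
      (weightedTotalDegree w a + 1)
      (mem_weightedDegreeLT_of_weightedTotalDegree_lt (Nat.lt_succ_self _)) hh' hD

theorem mem_span_of_mul_mem_span {T : Finset ι} {t₀ : ι} (ht₀ : t₀ ∉ T)
    {h : MvPolynomial σ R} (hh : f t₀ * h ∈ Ideal.span (f '' T)) :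
    h ∈ Ideal.span (f '' T) := by
  suffices ∀ n, ∀ h ∈ weightedDegreeLT w n, f t₀ * h ∈ Ideal.span (f '' T) →
      h ∈ Ideal.span (f '' T) from
    this _ h (mem_weightedDegreeLT_of_weightedTotalDegree_lt (Nat.lt_succ_self _)) hh
  have hμ₀ := isWeightedHomogeneous_monomial w (E t₀) (1 : R) rfl
  intro n
  induction n with
  | zero =>
    intro h h0 _
    rw [eq_zero_of_mem_weightedDegreeLT_zero h0]
    exact zero_mem _
  | succ k ih =>
    intro h hk hh
    have hhf := mul_mem_weightedDegreeLT hk (mem_weightedDegreeLT_of_sub_mem hμ₀ (hf t₀))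
    rw [← add_assoc, mul_comm] at hhf
    have hlead := weightedHomogeneousComponent_mem_span_monomial hf hE T hh hhf
    rw [mul_comm, weightedHomogeneousComponent_mul_of_sub_mem hμ₀ (hf t₀) hk, mul_comm]
      at hlead
    obtain ⟨c, hc, hhc⟩ := exists_sub_mem_weightedDegreeLT hf hk
      (mem_span_monomial_of_monomial_mul_mem
        (fun t ht => hE (ne_of_mem_of_not_mem ht ht₀)) hlead)
    have := ih _ hhc (by rw [mul_sub]; exact sub_mem hh (Ideal.mul_mem_left _ _ hc))
    simpa using add_mem this hc

theorem one_notMem_span [Nontrivial R] (hE₀ : ∀ t, E t ≠ 0) (T : Finset ι) :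
    (1 : MvPolynomial σ R) ∉ Ideal.span (f '' T) := by
  intro h1
  have := weightedHomogeneousComponent_mem_span_monomial hf hE T h1
    (isWeightedHomogeneous_one R w).mem_weightedDegreeLT
  rw [(isWeightedHomogeneous_one R w).weightedHomogeneousComponent_same,
    ← Set.image_image (fun s => monomial s (1 : R)) E, mem_ideal_span_monomial_image] at this
  obtain ⟨_, ⟨t, _, rfl⟩, ht⟩ := this 0 (by simp)
  exact hE₀ t (le_bot_iff.mp ht)

end LeadingMonomials

theorem isRegular_map_of_weightedTotalDegree_sub_monomial_lt [Nontrivial R] {ι : Type*}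
    {E : ι → σ →₀ ℕ} {f : ι → MvPolynomial σ R}
    (hE : Pairwise fun s t => Disjoint (E s).support (E t).support)
    (hf : ∀ t, weightedTotalDegree w (f t - monomial (E t) 1) < Finsupp.weight w (E t))
    {L : List ι} (hL : L.Nodup) : IsRegular (MvPolynomial σ R) (L.map f) :=
  have hf' t := mem_weightedDegreeLT_of_weightedTotalDegree_lt (hf t)
  isRegular_map_of_mul_mem_span f hL (fun _ _ ht _ => mem_span_of_mul_mem_span hf' hE ht)
    (one_notMem_span hf' hE fun t h0 => by simpa [h0] using hf t)

end MvPolynomial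

section VarietyOfComplexes

variable {m n N : ℕ}

/-- The monomial `y_{j,l} x_{l,i}` gets weight `N² + (i + j)² - (l - i - j)²`, which is
maximal exactly at `l = i + j`. -/
def complexWeight (m n N : ℕ) : (Fin N × Fin n) ⊕ (Fin m × Fin N) → ℕ :=
  Sum.elim (fun x => 2 * x.2 * x.1) (fun y => N ^ 2 + 2 * y.1 * y.2 - y.2 ^ 2)

noncomputable def termExponent (t : Fin m × Fin n) (l : Fin N) :
    (Fin N × Fin n) ⊕ (Fin m × Fin N) →₀ ℕ :=
  Finsupp.single (Sum.inr (t.1, l)) 1 + Finsupp.single (Sum.inl (l, t.2)) 1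

def diagIndex (hN : n + m ≤ N + 1) (t : Fin m × Fin n) : Fin N :=
  ⟨t.1 + t.2, by omega⟩

lemma weight_termExponent (t : Fin m × Fin n) (l : Fin N) :
    Finsupp.weight (complexWeight m n N) (termExponent t l) =
      N ^ 2 + 2 * t.1 * l - l ^ 2 + 2 * t.2 * l := by
  simp only [termExponent, map_add, Finsupp.weight_single, complexWeight, smul_eq_mul, one_mul,
    Sum.elim_inl, Sum.elim_inr]

lemma weight_termExponent_lt (hN : n + m ≤ N + 1) (t : Fin m × Fin n) {l : Fin N}
    (hl : l ≠ diagIndex hN t) :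
    Finsupp.weight (complexWeight m n N) (termExponent t l) <
      Finsupp.weight (complexWeight m n N) (termExponent t (diagIndex hN t)) := by
  have hl' : (l : ℕ) ≠ t.1 + t.2 := fun h => hl (Fin.ext h)
  simp only [weight_termExponent, diagIndex]
  have h1 : (l : ℕ) ^ 2 ≤ N ^ 2 := Nat.pow_le_pow_left l.isLt.le 2
  have h2 : ((t.1 : ℕ) + t.2) ^ 2 ≤ N ^ 2 := Nat.pow_le_pow_left (by omega) 2
  have h3 : 0 < ((l : ℤ) - (t.1 + t.2)) ^ 2 := by
    have : (l : ℤ) - (t.1 + t.2) ≠ 0 := by omega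
    positivity
  zify [h1, h2, h1.trans (Nat.le_add_right _ _), h2.trans (Nat.le_add_right _ _)]
  nlinarith

lemma pairwise_disjoint_support_termExponent (hN : n + m ≤ N + 1) :
    Pairwise fun s t : Fin m × Fin n =>
      Disjoint (termExponent s (diagIndex hN s)).support
        (termExponent t (diagIndex hN t)).support := by
  intro s t hst
  have hsub (u : Fin m × Fin n) : (termExponent u (diagIndex hN u)).support ⊆
      {Sum.inr (u.1, diagIndex hN u), Sum.inl (diagIndex hN u, u.2)} :=
    Finsupp.support_add.trans
      (Finset.union_subset_union Finsupp.support_single_subset Finsupp.support_single_subset)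
  refine Disjoint.mono (hsub s) (hsub t) ?_
  rw [Ne, Prod.ext_iff, Fin.ext_iff, Fin.ext_iff] at hst
  simp [diagIndex, Fin.ext_iff]
  omega

theorem isRegular_quadrics {K : Type*} [CommRing K] [Nontrivial K] (hN : n + m ≤ N + 1) :
    IsRegular (MvPolynomial ((Fin N × Fin n) ⊕ (Fin m × Fin N)) K)
      ((List.finRange m).flatMap fun j => (List.finRange n).map fun i =>
        ∑ l : Fin N, (X (Sum.inr (j, l)) * X (Sum.inl (l, i)) : MvPolynomial _ K)) := by
  have hf (t : Fin m × Fin n) : weightedTotalDegree (complexWeight m n N)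
      (∑ l, monomial (termExponent t l) (1 : K) - monomial (termExponent t (diagIndex hN t)) 1) <
        Finsupp.weight (complexWeight m n N) (termExponent t (diagIndex hN t)) := by
    rw [← Finset.sum_erase_eq_sub (Finset.mem_univ _)]
    refine weightedTotalDegree_lt_of_mem ?_ (Submodule.sum_mem _ fun l hl =>
      (monomial_mem_restrictSupport K).mpr
        (Or.inl (weight_termExponent_lt hN t (Finset.ne_of_mem_erase hl))))
    have := Nat.pow_lt_pow_left (diagIndex hN t).isLt two_ne_zero
    rw [weight_termExponent]
    omega
  convert isRegular_map_of_weightedTotalDegree_sub_monomial_lt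
    (pairwise_disjoint_support_termExponent hN) hf
    ((List.nodup_finRange m).product (List.nodup_finRange n)) using 1
  simp [SProd.sprod, List.product, List.map_flatMap, Function.comp_def, termExponent, X,
    monomial_mul]

end VarietyOfComplexes

theorem variety_of_complexes_quadrics_regular_sequence_general
    (K : Type*) [Field K]
    (n m d : ℕ) (N : ℕ) (hN : N = n + m + d)
    (Xgen : Matrix (Fin N) (Fin n) (MvPolynomial ((Fin N × Fin n) ⊕ (Fin m × Fin N)) K))
    (hX : ∀ l i, Xgen l i = MvPolynomial.X (Sum.inl (l, i)))
    (Ygen : Matrix (Fin m) (Fin N) (MvPolynomial ((Fin N × Fin n) ⊕ (Fin m × Fin N)) K))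
    (hY : ∀ j l, Ygen j l = MvPolynomial.X (Sum.inr (j, l)))
    (g : Fin m → Fin n → MvPolynomial ((Fin N × Fin n) ⊕ (Fin m × Fin N)) K)
    (hg : ∀ j i, g j i = ((Ygen * Xgen :
      Matrix (Fin m) (Fin n) (MvPolynomial ((Fin N × Fin n) ⊕ (Fin m × Fin N)) K)) j i))
    (l : List (MvPolynomial ((Fin N × Fin n) ⊕ (Fin m × Fin N)) K))
    (hl : l = (List.finRange m).flatMap fun j => (List.finRange n).map fun i => g j i) :
    RingTheory.Sequence.IsRegular (MvPolynomial ((Fin N × Fin n) ⊕ (Fin m × Fin N)) K) l := by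
  have hquad (j : Fin m) (i : Fin n) :
      g j i = ∑ l, X (Sum.inr (j, l)) * X (Sum.inl (l, i)) := by
    simp only [hg, Matrix.mul_apply, hX, hY]
  simp only [hl, hquad]
  exact isRegular_quadrics (by omega)

/-- The `nm` quadrics `g j i`, the entries of the product `Y * X` of
the generic `m × N` and `N × n` matrices (`N = n + m + d`), form a regular sequence in
the polynomial ring `A`; in particular the coordinate ring of the variety of length-2
complexes is a complete intersection. -/
theorem variety_of_complexes_quadrics_regular_sequence
    (K : Type*) [Field K] [IsAlgClosed K]
    (n m d : ℕ) (hn : 1 ≤ n) (hm : 1 ≤ m) (N : ℕ) (hN : N = n + m + d)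
    (Xgen : Matrix (Fin N) (Fin n) (MvPolynomial ((Fin N × Fin n) ⊕ (Fin m × Fin N)) K))
    (hX : ∀ l i, Xgen l i = MvPolynomial.X (Sum.inl (l, i)))
    (Ygen : Matrix (Fin m) (Fin N) (MvPolynomial ((Fin N × Fin n) ⊕ (Fin m × Fin N)) K))
    (hY : ∀ j l, Ygen j l = MvPolynomial.X (Sum.inr (j, l)))
    (g : Fin m → Fin n → MvPolynomial ((Fin N × Fin n) ⊕ (Fin m × Fin N)) K)
    (hg : ∀ j i, g j i = ((Ygen * Xgen :
      Matrix (Fin m) (Fin n) (MvPolynomial ((Fin N × Fin n) ⊕ (Fin m × Fin N)) K)) j i))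
    (l : List (MvPolynomial ((Fin N × Fin n) ⊕ (Fin m × Fin N)) K))
    (hl : l = (List.finRange m).flatMap fun j => (List.finRange n).map fun i => g j i) :
    RingTheory.Sequence.IsRegular (MvPolynomial ((Fin N × Fin n) ⊕ (Fin m × Fin N)) K) l :=
  variety_of_complexes_quadrics_regular_sequence_general K n m d N hN Xgen hX Ygen hY g hg l hl
end

section
/- Let (X, Y) and (X', Y') be pairs of matrices over k, with X, X' of size N × n and Y, Y' of size m × N, satisfying Y X = 0 and Y' X' = 0. Then (rank X = rank X' and rank Y = rank Y') if and only if there exist invertible matrices P ∈ GL_n(k), G ∈ GL_N(k), R ∈ GL_m(k) such that X' = G X P and Y' = R Y G^{-1}. That is, two closed points of the variety of length-2 complexes lie in the same GL_n(k) × GL_N(k) × GL_m(k) orbit if and only if the ranks of the two matrices agree. (Proposition 5.1(d), orbit classification.) -/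
/-!
Each map of a complex `V →f W →g U` is an isomorphism from a complement of its kernel onto its
range, and for a second complex with the same ranks rank–nullity matches the dimensions of all
these pieces. Choose `α : V ≃ V` carrying `f` to `f'`. The induced `range f ≃ range f'` sits inside
`ker g` and `ker g'` and extends to `ker g ≃ ker g'`; gluing that with `range g ≃ range g'` across
complements of the kernels gives `β`, and `γ` is any extension of `range g ≃ range g'` to `U`.
Conversely, invertible matrices preserve rank.
-/

open LinearMap Submodule Module

namespace LinearEquiv

variable {R V V' : Type*} [Ring R] [AddCommGroup V] [Module R V] [AddCommGroup V'] [Module R V']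
  {p q : Submodule R V} {p' q' : Submodule R V'}

noncomputable def ofIsCompl (h : IsCompl p q) (h' : IsCompl p' q') (e₁ : p ≃ₗ[R] p')
    (e₂ : q ≃ₗ[R] q') : V ≃ₗ[R] V' :=
  (prodEquivOfIsCompl p q h).symm ≪≫ₗ e₁.prodCongr e₂ ≪≫ₗ prodEquivOfIsCompl p' q' h'

variable (h : IsCompl p q) (h' : IsCompl p' q') (e₁ : p ≃ₗ[R] p') (e₂ : q ≃ₗ[R] q')

@[simp]
theorem ofIsCompl_apply_left (x : p) : ofIsCompl h h' e₁ e₂ x = e₁ x := by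
  simp [ofIsCompl]

@[simp]
theorem ofIsCompl_apply_right (x : q) : ofIsCompl h h' e₁ e₂ x = e₂ x := by
  simp [ofIsCompl]

end LinearEquiv

section

variable {K V W U : Type*} [Field K] [AddCommGroup V] [Module K V] [AddCommGroup W] [Module K W]
  [AddCommGroup U] [Module K U]

noncomputable def LinearMap.equivRangeOfIsComplKer (f : V →ₗ[K] W) {C : Submodule K V}
    (hC : IsCompl (ker f) C) : C ≃ₗ[K] range f :=
  (quotientEquivOfIsCompl _ _ hC).symm ≪≫ₗ f.quotKerEquivRange

@[simp]
theorem LinearMap.equivRangeOfIsComplKer_apply (f : V →ₗ[K] W) {C : Submodule K V}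
    (hC : IsCompl (ker f) C) (c : C) : (f.equivRangeOfIsComplKer hC c : W) = f c :=
  rfl

theorem exists_linearEquiv_extend_of_injective {V' : Type*} [AddCommGroup V']
    [Module K V'] [FiniteDimensional K V] [FiniteDimensional K V'] {A : Type*} [AddCommGroup A]
    [Module K A] (i : A →ₗ[K] V) (j : A →ₗ[K] V') (hi : Function.Injective i)
    (hj : Function.Injective j) (hV : finrank K V = finrank K V') :
    ∃ e : V ≃ₗ[K] V', ∀ a, e (i a) = j a := by
  obtain ⟨q, hq⟩ := (range i).exists_isCompl
  obtain ⟨q', hq'⟩ := (range j).exists_isCompl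
  let e₁ : range i ≃ₗ[K] range j :=
    (LinearEquiv.ofInjective i hi).symm ≪≫ₗ LinearEquiv.ofInjective j hj
  have hqq' : finrank K q = finrank K q' := by
    have := finrank_add_eq_of_isCompl hq
    have := finrank_add_eq_of_isCompl hq'
    have := e₁.finrank_eq
    omega
  refine ⟨.ofIsCompl hq hq' e₁ (.ofFinrankEq q q' hqq'), fun a => ?_⟩
  have hia : i a = (⟨i a, mem_range_self i a⟩ : range i) := rfl
  rw [hia, LinearEquiv.ofIsCompl_apply_left]
  exact congrArg j ((LinearEquiv.ofInjective i hi).symm_apply_apply a)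

theorem LinearMap.exists_linearEquiv_extend_ker {V' W' : Type*} [AddCommGroup V'] [Module K V']
    [AddCommGroup W'] [Module K W'] (f : V →ₗ[K] W) (f' : V' →ₗ[K] W')
    (κ : ker f ≃ₗ[K] ker f') (δ : range f ≃ₗ[K] range f') :
    ∃ e : V ≃ₗ[K] V', (∀ x : ker f, e x = κ x) ∧ ∀ v, f' (e v) = δ (f.rangeRestrict v) := by
  obtain ⟨C, hC⟩ := (ker f).exists_isCompl
  obtain ⟨C', hC'⟩ := (ker f').exists_isCompl
  let θ := f.equivRangeOfIsComplKer hC ≪≫ₗ δ ≪≫ₗ (f'.equivRangeOfIsComplKer hC').symm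
  refine ⟨.ofIsCompl hC hC' κ θ, fun x => LinearEquiv.ofIsCompl_apply_left .., fun v => ?_⟩
  obtain ⟨k, hk, c, hc, rfl⟩ := mem_sup.mp (hC.sup_eq_top ▸ mem_top : v ∈ ker f ⊔ C)
  have hθ : f' (θ ⟨c, hc⟩) = δ (f.equivRangeOfIsComplKer hC ⟨c, hc⟩) := by
    rw [← equivRangeOfIsComplKer_apply f' hC']
    simp [θ]
  have hk' : f.rangeRestrict k = 0 := Subtype.ext hk
  calc f' (LinearEquiv.ofIsCompl hC hC' κ θ (k + c))
      = f' (κ ⟨k, hk⟩) + f' (θ ⟨c, hc⟩) := by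
        rw [map_add, map_add, ← LinearEquiv.ofIsCompl_apply_left hC hC' κ θ ⟨k, hk⟩,
          ← LinearEquiv.ofIsCompl_apply_right hC hC' κ θ ⟨c, hc⟩]
    _ = δ (f.rangeRestrict (k + c)) := by
        rw [mem_ker.mp (κ _).2, zero_add, hθ, map_add, hk', zero_add]
        rfl

theorem LinearMap.finrank_ker_eq_of_finrank_range_eq {V' W' : Type*} [AddCommGroup V']
    [Module K V'] [AddCommGroup W'] [Module K W'] [FiniteDimensional K V] [FiniteDimensional K V']
    (f : V →ₗ[K] W) (f' : V' →ₗ[K] W') (hV : finrank K V = finrank K V')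
    (hf : finrank K (range f) = finrank K (range f')) :
    finrank K (ker f) = finrank K (ker f') := by
  have := f.finrank_range_add_finrank_ker
  have := f'.finrank_range_add_finrank_ker
  omega

theorem exists_linearEquiv_complex_of_finrank_range_eq [FiniteDimensional K V]
    [FiniteDimensional K W] [FiniteDimensional K U] {f f' : V →ₗ[K] W} {g g' : W →ₗ[K] U}
    (hgf : g ∘ₗ f = 0) (hgf' : g' ∘ₗ f' = 0)
    (hf : finrank K (range f) = finrank K (range f'))
    (hg : finrank K (range g) = finrank K (range g')) :
    ∃ (α : V ≃ₗ[K] V) (β : W ≃ₗ[K] W) (γ : U ≃ₗ[K] U),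
      (∀ v, β (f v) = f' (α v)) ∧ ∀ w, γ (g w) = g' (β w) := by
  have hfg : range f ≤ ker g := range_le_ker_iff.mpr hgf
  have hfg' : range f' ≤ ker g' := range_le_ker_iff.mpr hgf'
  let δf := LinearEquiv.ofFinrankEq _ _ hf
  let δg := LinearEquiv.ofFinrankEq _ _ hg
  obtain ⟨α, -, hα⟩ := f.exists_linearEquiv_extend_ker f'
    (.ofFinrankEq _ _ (f.finrank_ker_eq_of_finrank_range_eq f' rfl hf)) δf
  obtain ⟨κ, hκ⟩ := exists_linearEquiv_extend_of_injective (inclusion hfg)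
    (inclusion hfg' ∘ₗ δf.toLinearMap) (inclusion_injective hfg)
    ((inclusion_injective hfg').comp δf.injective)
    (g.finrank_ker_eq_of_finrank_range_eq g' rfl hg)
  obtain ⟨β, hβκ, hβ⟩ := g.exists_linearEquiv_extend_ker g' κ δg
  obtain ⟨γ, hγ⟩ := exists_linearEquiv_extend_of_injective (range g).subtype
    ((range g').subtype ∘ₗ δg.toLinearMap) (range g).injective_subtype
    ((range g').injective_subtype.comp δg.injective) rfl
  refine ⟨α, β, γ, fun v => ?_, fun w => ?_⟩
  · calc β (f v) = κ (inclusion hfg (f.rangeRestrict v)) :=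
          hβκ (inclusion hfg (f.rangeRestrict v))
      _ = f' (α v) := by rw [hα]; exact congrArg Subtype.val (hκ _)
  · calc γ (g w) = γ ((range g).subtype (g.rangeRestrict w)) := rfl
      _ = g' (β w) := by rw [hγ, hβ]; rfl

end

namespace Matrix

variable {R : Type*} [CommRing R] {m n : Type*} [Fintype m] [Fintype n] [DecidableEq m]
  [DecidableEq n]

theorem isUnit_toMatrix'_linearEquiv (e : (n → R) ≃ₗ[R] (n → R)) :
    IsUnit (LinearMap.toMatrix' e.toLinearMap) :=
  LinearMap.isUnit_toMatrix'_iff.mpr ((Module.End.isUnit_iff _).mpr e.bijective)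

theorem eq_toMatrix'_mul_mul_inv {A B : Matrix m n R} (α : (n → R) ≃ₗ[R] (n → R))
    (β : (m → R) ≃ₗ[R] (m → R)) (h : ∀ v, β (A.mulVecLin v) = B.mulVecLin (α v)) :
    B = LinearMap.toMatrix' β.toLinearMap * A * (LinearMap.toMatrix' α.toLinearMap)⁻¹ := by
  have hsq : LinearMap.toMatrix' β.toLinearMap * A = B * LinearMap.toMatrix' α.toLinearMap := by
    rw [← toMatrix'_toLin' A, ← toMatrix'_toLin' B, ← LinearMap.toMatrix'_comp,
      ← LinearMap.toMatrix'_comp]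
    exact congrArg _ (LinearMap.ext h)
  rw [hsq, mul_nonsing_inv_cancel_right]
  exact (isUnit_iff_isUnit_det _).mp (isUnit_toMatrix'_linearEquiv α)

theorem rank_mul_mul_of_isUnit (A : Matrix m n R) {G : Matrix m m R} {P : Matrix n n R}
    (hG : IsUnit G) (hP : IsUnit P) : (G * A * P).rank = A.rank := by
  rw [rank_mul_eq_left_of_isUnit_det _ _ ((isUnit_iff_isUnit_det P).mp hP),
    rank_mul_eq_right_of_isUnit_det _ _ ((isUnit_iff_isUnit_det G).mp hG)]

end Matrix

theorem variety_of_complexes_orbit_classification_general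
    (K : Type*) [Field K]
    (n m N : ℕ)
    (X X' : Matrix (Fin N) (Fin n) K) (Y Y' : Matrix (Fin m) (Fin N) K)
    (hYX : Y * X = 0) (hYX' : Y' * X' = 0) :
    (X.rank = X'.rank ∧ Y.rank = Y'.rank) ↔
      ∃ (P : Matrix (Fin n) (Fin n) K) (G : Matrix (Fin N) (Fin N) K)
        (R : Matrix (Fin m) (Fin m) K),
        IsUnit P ∧ IsUnit G ∧ IsUnit R ∧ X' = G * X * P ∧ Y' = R * Y * G⁻¹ := by
  constructor
  · rintro ⟨hX, hY⟩
    obtain ⟨α, β, γ, hXαβ, hYβγ⟩ := exists_linearEquiv_complex_of_finrank_range_eq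
      (by rw [← Matrix.mulVecLin_mul, hYX, Matrix.mulVecLin_zero])
      (by rw [← Matrix.mulVecLin_mul, hYX', Matrix.mulVecLin_zero]) hX hY
    exact ⟨_, _, _, Matrix.isUnit_nonsing_inv_iff.mpr (Matrix.isUnit_toMatrix'_linearEquiv α),
      Matrix.isUnit_toMatrix'_linearEquiv β, Matrix.isUnit_toMatrix'_linearEquiv γ,
      Matrix.eq_toMatrix'_mul_mul_inv α β hXαβ, Matrix.eq_toMatrix'_mul_mul_inv β γ hYβγ⟩
  · rintro ⟨P, G, R, hP, hG, hR, rfl, rfl⟩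
    exact ⟨(X.rank_mul_mul_of_isUnit hG hP).symm,
      (Y.rank_mul_mul_of_isUnit hR (Matrix.isUnit_nonsing_inv_iff.mpr hG)).symm⟩

/-- Two pairs of matrices `(X, Y)` and `(X', Y')`, with `X, X'` of
size `N × n` and `Y, Y'` of size `m × N`, satisfying `Y X = 0` and `Y' X' = 0`, have
the same pair of ranks if and only if they lie in the same
`GL_n(K) × GL_N(K) × GL_m(K)` orbit: `X' = G X P`, `Y' = R Y G⁻¹` for invertible
`P`, `G`, `R`. -/
theorem variety_of_complexes_orbit_classification
    (K : Type*) [Field K] [IsAlgClosed K]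
    (n m N : ℕ) (hn : 1 ≤ n) (hm : 1 ≤ m) (hN : 1 ≤ N)
    (X X' : Matrix (Fin N) (Fin n) K) (Y Y' : Matrix (Fin m) (Fin N) K)
    (hYX : Y * X = 0) (hYX' : Y' * X' = 0) :
    (X.rank = X'.rank ∧ Y.rank = Y'.rank) ↔
      ∃ (P : Matrix (Fin n) (Fin n) K) (G : Matrix (Fin N) (Fin N) K)
        (R : Matrix (Fin m) (Fin m) K),
        IsUnit P ∧ IsUnit G ∧ IsUnit R ∧ X' = G * X * P ∧ Y' = R * Y * G⁻¹ :=
  variety_of_complexes_orbit_classification_general K n m N X X' Y Y' hYX hYX'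
end
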